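/- arXiv:math/0701112 — 2 statements merged into one kernel-verified Lean document; each statement's English description precedes it below -/
import Mathlib

section
/- Let f : X → Y be a map from a metric space to a paracompact space, and let M be the mapping cylinder of f with the teardrop topology. Then M is paracompact. -/
open Set TopologicalSpace

/-- The underlying set of the mapping cylinder `X × (0,1] ⊔ Y`
(`(x,0)` is identified with `f(x)`, i.e. points of `Y` serve as the identified ends). -/
def MapCyl (X Y : Type*) : Type _ := (X × ↥(Set.Ioc (0 : ℝ) 1)) ⊕ Y

/-- The generating collection for the teardrop topology on the mapping cylinder:
open subsets of `X × (0,1]` and sets `U ∪ (f⁻¹(U) × (0,ε))` for `U` open in `Y`. -/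
def mapCylBasis (X Y : Type*) [TopologicalSpace X] [TopologicalSpace Y] (f : X → Y) :
    Set (Set (MapCyl X Y)) :=
  {s | ∃ u : Set (X × ↥(Set.Ioc (0 : ℝ) 1)), IsOpen u ∧ s = Sum.inl '' u} ∪
  {s | ∃ (U : Set Y) (ε : ℝ), IsOpen U ∧ 0 < ε ∧ ε ≤ 1 ∧
      s = Sum.inr '' U ∪ Sum.inl '' {q : X × ↥(Set.Ioc (0 : ℝ) 1) | f q.1 ∈ U ∧ (q.2 : ℝ) < ε}}

/-!
Every point of `Y` has a teardrop neighbourhood `U_y ∪ f⁻¹(U_y) × (0, ε_y)` inside a member of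
the cover, and paracompactness of `Y` shrinks the `U_y` to a locally finite open cover `A_y`.
A partition of unity on the metric space `X` glues the heights `ε_y / 2` into a continuous
`g : X → ℝ` which, at each `x`, lies below some `ε_y` with `f x ∈ A_y`, and which is bounded below
by a positive constant over a neighbourhood of each point of `Y` (local finiteness of `A`).
The teardrops over the `A_y` then cover the region `t ≤ g x` of `X × (0,1]`; the region `t > g x`
is covered by a locally finite refinement taken in the metric space `X × (0,1]`, and the lower
bound on `g` keeps its closure away from `Y`, so this family stays locally finite in the cylinder.
-/

open Filter Topology Function

theorem exists_continuous_lt_and_ge_of_iUnion_eq_univ {ι X : Type*} [TopologicalSpace X]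
    [NormalSpace X] [ParacompactSpace X] {U : ι → Set X} (hU : ∀ i, IsOpen (U i))
    (hcov : ⋃ i, U i = univ) {δ ε : ι → ℝ} (hδε : ∀ i, δ i < ε i) :
    ∃ g : C(X, ℝ), ∀ x, (∃ i, x ∈ U i ∧ g x < ε i) ∧ ∃ j, x ∈ U j ∧ δ j ≤ g x := by
  refine exists_continuous_forall_mem_convex_of_local_const
    (t := fun x => {r | (∃ i, x ∈ U i ∧ r < ε i) ∧ ∃ j, x ∈ U j ∧ δ j ≤ r})
    (fun x => ?_) fun x => ?_
  · refine Set.OrdConnected.convex ⟨fun r₁ h₁ r₂ h₂ r hr => ⟨?_, ?_⟩⟩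
    · exact h₂.1.imp fun i hi => ⟨hi.1, hr.2.trans_lt hi.2⟩
    · exact h₁.2.imp fun j hj => ⟨hj.1, hj.2.trans hr.1⟩
  · obtain ⟨i, hi⟩ := mem_iUnion.1 (hcov ▸ mem_univ x)
    exact ⟨δ i, eventually_of_mem ((hU i).mem_nhds hi) fun x' hx' =>
      ⟨⟨i, hx', hδε i⟩, i, hx', le_rfl⟩⟩

theorem LocallyFinite.image_of_isOpenEmbedding {ι Z M : Type*} [TopologicalSpace Z]
    [TopologicalSpace M] {e : Z → M} (he : IsOpenEmbedding e) {u : ι → Set Z}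
    (hu : LocallyFinite u) {S : Set Z} (huS : ∀ i, u i ⊆ S) (hS : closure (e '' S) ⊆ range e) :
    LocallyFinite fun i => e '' u i := by
  intro m
  by_cases hm : m ∈ range e
  · obtain ⟨z, rfl⟩ := hm
    obtain ⟨t, ht, hfin⟩ := hu z
    refine ⟨e '' t, he.isOpenMap.image_mem_nhds ht, hfin.subset ?_⟩
    rintro i ⟨_, ⟨a, ha, rfl⟩, b, hb, hab⟩
    exact ⟨a, ha, he.injective hab ▸ hb⟩
  · refine ⟨(closure (e '' S))ᶜ, isClosed_closure.compl_mem_nhds (mt (@hS m) hm),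
      finite_empty.subset ?_⟩
    rintro i ⟨_, ⟨a, ha, rfl⟩, hout⟩
    exact hout (subset_closure (mem_image_of_mem e (huS i ha)))

theorem LocallyFinite.exists_pos_le_of_forall_exists_le {ι X Y : Type*} [TopologicalSpace Y]
    {f : X → Y} {A : ι → Set Y} (hA : LocallyFinite A) {δ : ι → ℝ} (hδ : ∀ i, 0 < δ i)
    {g : X → ℝ} (hg : ∀ x, ∃ j, f x ∈ A j ∧ δ j ≤ g x) (y : Y) :
    ∃ V ∈ 𝓝 y, ∃ c > 0, ∀ x, f x ∈ V → c ≤ g x := by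
  obtain ⟨V, hV, hfin⟩ := hA y
  have : ∀ᶠ c in 𝓝[>] (0 : ℝ), 0 < c ∧ ∀ i ∈ {i | (A i ∩ V).Nonempty}, c ≤ δ i :=
    eventually_mem_nhdsWithin.and
      (hfin.eventually_all.2 fun i _ => nhdsWithin_le_nhds (Iic_mem_nhds (hδ i)))
  obtain ⟨c, hc0, hc⟩ := this.exists
  refine ⟨V, hV, c, hc0, fun x hx => ?_⟩
  obtain ⟨j, hj, hδj⟩ := hg x
  exact (hc j ⟨f x, hj, hx⟩).trans hδj

theorem exists_continuous_lt_of_locallyFinite_cover {ι X Y : Type*} [TopologicalSpace X]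
    [NormalSpace X] [ParacompactSpace X] [TopologicalSpace Y] {f : X → Y} (hf : Continuous f)
    {A : ι → Set Y} (hA : ∀ i, IsOpen (A i)) (hAcov : ⋃ i, A i = univ) (hAlf : LocallyFinite A)
    {ε : ι → ℝ} (hε : ∀ i, 0 < ε i) :
    ∃ g : C(X, ℝ), (∀ x, ∃ i, f x ∈ A i ∧ g x < ε i) ∧
      ∀ y, ∃ V ∈ 𝓝 y, ∃ c > 0, ∀ x, f x ∈ V → c ≤ g x := by
  obtain ⟨g, hg⟩ := exists_continuous_lt_and_ge_of_iUnion_eq_univ (U := fun i => f ⁻¹' A i)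
    (δ := fun i => ε i / 2) (fun i => (hA i).preimage hf)
    (by rw [← preimage_iUnion, hAcov, preimage_univ]) fun i => half_lt_self (hε i)
  exact ⟨g, fun x => (hg x).1,
    hAlf.exists_pos_le_of_forall_exists_le (fun i => half_pos (hε i)) fun x => (hg x).2⟩

-- A type synonym, so that the teardrop topology of `f` can be an instance.
def Teardrop {X Y : Type*} (_f : X → Y) : Type _ := MapCyl X Y

namespace Teardrop

variable {X Y : Type*} {f : X → Y}

variable (f) in
def inl : X × Ioc (0 : ℝ) 1 → Teardrop f := Sum.inl

variable (f) in
def inr : Y → Teardrop f := Sum.inr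

@[elab_as_elim]
theorem ind {motive : Teardrop f → Prop} (inl : ∀ q, motive (inl f q))
    (inr : ∀ y, motive (inr f y)) (m : Teardrop f) : motive m :=
  Sum.rec inl inr m

theorem inl_injective : Injective (inl f) := Sum.inl_injective

@[simp]
theorem inl_inj {q q' : X × Ioc (0 : ℝ) 1} : inl f q = inl f q' ↔ q = q' := Sum.inl.inj_iff

@[simp]
theorem inr_inj {y y' : Y} : inr f y = inr f y' ↔ y = y' := Sum.inr.inj_iff

@[simp]
theorem inl_ne_inr {q : X × Ioc (0 : ℝ) 1} {y : Y} : inl f q ≠ inr f y := Sum.inl_ne_inr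

@[simp]
theorem inr_ne_inl {q : X × Ioc (0 : ℝ) 1} {y : Y} : inr f y ≠ inl f q := Sum.inr_ne_inl

variable (f) in
def proj : Teardrop f → Y := Sum.elim (fun q => f q.1) id

@[simp]
theorem proj_inl (q : X × Ioc (0 : ℝ) 1) : proj f (inl f q) = f q.1 := rfl

@[simp]
theorem proj_inr (y : Y) : proj f (inr f y) = y := rfl

variable (f) in
def basicOpen (A : Set Y) (ε : ℝ) : Set (Teardrop f) :=
  inr f '' A ∪ inl f '' {q | f q.1 ∈ A ∧ (q.2 : ℝ) < ε}

@[simp]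
theorem inl_mem_basicOpen {q : X × Ioc (0 : ℝ) 1} {A : Set Y} {ε : ℝ} :
    inl f q ∈ basicOpen f A ε ↔ f q.1 ∈ A ∧ (q.2 : ℝ) < ε := by
  simp [basicOpen]

@[simp]
theorem inr_mem_basicOpen {y : Y} {A : Set Y} {ε : ℝ} : inr f y ∈ basicOpen f A ε ↔ y ∈ A := by
  simp [basicOpen]

theorem basicOpen_mono {A A' : Set Y} (hA : A ⊆ A') {ε ε' : ℝ} (hε : ε ≤ ε') :
    basicOpen f A ε ⊆ basicOpen f A' ε' :=
  union_subset_union (image_mono hA) (image_mono fun _ hq => ⟨hA hq.1, hq.2.trans_le hε⟩)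

theorem basicOpen_subset_preimage_proj (A : Set Y) (ε : ℝ) :
    basicOpen f A ε ⊆ proj f ⁻¹' A := by
  rintro _ (⟨y, hy, rfl⟩ | ⟨q, hq, rfl⟩)
  exacts [hy, hq.1]

theorem iUnion_basicOpen_union_iUnion_image_inl {ι κ : Type*} {A : ι → Set Y}
    (hA : ⋃ i, A i = univ) {ε : ι → ℝ} {g : X → ℝ} (hg : ∀ x, ∃ i, f x ∈ A i ∧ g x < ε i)
    {B : κ → Set (X × Ioc (0 : ℝ) 1)} (hB : ⋃ k, B k = univ) :
    (⋃ i, basicOpen f (A i) (ε i)) ∪ ⋃ k, inl f '' (B k ∩ {q | g q.1 < q.2}) = univ := by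
  refine eq_univ_of_forall fun m => ?_
  induction m using ind with
  | inl q =>
    by_cases hq : (q.2 : ℝ) ≤ g q.1
    · obtain ⟨i, hi, hlt⟩ := hg q.1
      exact Or.inl (mem_iUnion.2 ⟨i, inl_mem_basicOpen.2 ⟨hi, hq.trans_lt hlt⟩⟩)
    · obtain ⟨k, hk⟩ := mem_iUnion.1 (hB ▸ mem_univ q)
      exact Or.inr (mem_iUnion.2 ⟨k, mem_image_of_mem _ ⟨hk, not_le.1 hq⟩⟩)
  | inr y =>
    obtain ⟨i, hi⟩ := mem_iUnion.1 (hA ▸ mem_univ y)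
    exact Or.inl (mem_iUnion.2 ⟨i, inr_mem_basicOpen.2 hi⟩)

variable [TopologicalSpace X] [TopologicalSpace Y]

instance : TopologicalSpace (Teardrop f) := generateFrom (mapCylBasis X Y f)

theorem isOpen_basicOpen {A : Set Y} (hA : IsOpen A) {ε : ℝ} (h0 : 0 < ε) (h1 : ε ≤ 1) :
    IsOpen (basicOpen f A ε) :=
  isOpen_generateFrom_of_mem (Or.inr ⟨A, ε, hA, h0, h1, rfl⟩)

theorem isOpenMap_inl : IsOpenMap (inl f) := fun u hu =>
  isOpen_generateFrom_of_mem (Or.inl ⟨u, hu, rfl⟩)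

theorem continuous_inl (hf : Continuous f) : Continuous (inl f) := by
  refine continuous_generateFrom_iff.2 ?_
  rintro s (⟨u, hu, rfl⟩ | ⟨A, ε, hA, -, -, rfl⟩)
  · change IsOpen (inl f ⁻¹' (inl f '' u))
    rwa [preimage_image_eq u inl_injective]
  · change IsOpen (inl f ⁻¹' basicOpen f A ε)
    have : inl f ⁻¹' basicOpen f A ε = {q | f q.1 ∈ A ∧ (q.2 : ℝ) < ε} := by
      ext q; simp
    exact this ▸ (hA.preimage (hf.comp continuous_fst)).inter
      (isOpen_lt (continuous_subtype_val.comp continuous_snd) continuous_const)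

theorem isOpenEmbedding_inl (hf : Continuous f) : IsOpenEmbedding (inl f) :=
  .of_continuous_injective_isOpenMap (continuous_inl hf) inl_injective isOpenMap_inl

theorem closure_image_inl_subset_range {g : X → ℝ}
    (hg : ∀ y, ∃ V ∈ 𝓝 y, ∃ c > 0, ∀ x, f x ∈ V → c ≤ g x) :
    closure (inl f '' {q | g q.1 < q.2}) ⊆ range (inl f) := by
  intro m hm
  induction m using ind with
  | inl q => exact mem_range_self q
  | inr y =>
    obtain ⟨V, hV, c, hc, hcg⟩ := hg y
    obtain ⟨_, hmem, q, hq, rfl⟩ := mem_closure_iff.1 hm (basicOpen f (interior V) (min c 1))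
      (isOpen_basicOpen isOpen_interior (lt_min hc one_pos) (min_le_right _ _))
      (inr_mem_basicOpen.2 (mem_interior_iff_mem_nhds.2 hV))
    rw [inl_mem_basicOpen] at hmem
    linarith [hcg q.1 (interior_subset hmem.1), min_le_left c 1, hmem.2, hq.out]

theorem continuous_proj (hf : Continuous f) : Continuous (proj f) := by
  refine continuous_def.2 fun A hA => ?_
  have : proj f ⁻¹' A = basicOpen f A 1 ∪ inl f '' {q | f q.1 ∈ A} := by
    ext m
    induction m using ind <;> simp +contextual
  exact this ▸ (isOpen_basicOpen hA one_pos le_rfl).union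
    (isOpenMap_inl _ (hA.preimage (hf.comp continuous_fst)))

theorem locallyFinite_basicOpen (hf : Continuous f) {ι : Type*} {A : ι → Set Y}
    (hA : LocallyFinite A) (ε : ι → ℝ) : LocallyFinite fun i => basicOpen f (A i) (ε i) :=
  (hA.preimage_continuous (continuous_proj hf)).subset fun i =>
    basicOpen_subset_preimage_proj (A i) (ε i)

theorem exists_basicOpen_subset {s : Set (Teardrop f)} (hs : IsOpen s) {y : Y}
    (hy : inr f y ∈ s) :
    ∃ (A : Set Y) (ε : ℝ), IsOpen A ∧ 0 < ε ∧ ε ≤ 1 ∧ y ∈ A ∧ basicOpen f A ε ⊆ s := by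
  induction hs with
  | basic t ht =>
    rcases ht with ⟨u, -, rfl⟩ | ⟨A, ε, hA, h0, h1, rfl⟩
    · change inr f y ∈ inl f '' u at hy
      simp at hy
    · change inr f y ∈ basicOpen f A ε at hy
      exact ⟨A, ε, hA, h0, h1, inr_mem_basicOpen.1 hy, subset_rfl⟩
  | univ => exact ⟨univ, 1, isOpen_univ, one_pos, le_rfl, mem_univ y, subset_univ _⟩
  | inter t₁ t₂ _ _ ih₁ ih₂ =>
    obtain ⟨A₁, ε₁, hA₁, h01, h11, hy1, hs1⟩ := ih₁ hy.1
    obtain ⟨A₂, ε₂, hA₂, h02, h12, hy2, hs2⟩ := ih₂ hy.2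
    refine ⟨A₁ ∩ A₂, min ε₁ ε₂, hA₁.inter hA₂, lt_min h01 h02, (min_le_left _ _).trans h11,
      ⟨hy1, hy2⟩, subset_inter ?_ ?_⟩
    · exact (basicOpen_mono inter_subset_left (min_le_left _ _)).trans hs1
    · exact (basicOpen_mono inter_subset_right (min_le_right _ _)).trans hs2
  | sUnion S _ ih =>
    obtain ⟨t, htS, hyt⟩ := hy
    obtain ⟨A, ε, hA, h0, h1, hyA, hsub⟩ := ih t htS hyt
    exact ⟨A, ε, hA, h0, h1, hyA, hsub.trans (subset_sUnion_of_mem htS)⟩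

theorem exists_locallyFinite_basicOpen_refinement [ParacompactSpace Y] {α : Type*}
    {s : α → Set (Teardrop f)} (hso : ∀ a, IsOpen (s a)) (hsu : ⋃ a, s a = univ) :
    ∃ (A : Y → Set Y) (ε : Y → ℝ), (∀ y, IsOpen (A y)) ∧ ⋃ y, A y = univ ∧ LocallyFinite A ∧
      (∀ y, 0 < ε y ∧ ε y ≤ 1) ∧ ∀ y, ∃ a, basicOpen f (A y) (ε y) ⊆ s a := by
  choose a W ε hWo hε0 hε1 hyW hWs using fun y : Y =>
    (mem_iUnion.1 (hsu ▸ mem_univ (inr f y))).imp fun a ha => exists_basicOpen_subset (hso a) ha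
  obtain ⟨A, hAo, hAcov, hAlf, hAW⟩ :=
    precise_refinement W hWo (iUnion_eq_univ_iff.2 fun y => ⟨y, hyW y⟩)
  exact ⟨A, ε, hAo, hAcov, hAlf, fun y => ⟨hε0 y, hε1 y⟩,
    fun y => ⟨a y, (basicOpen_mono (hAW y) le_rfl).trans (hWs y)⟩⟩

end Teardrop

open Teardrop

/-- Let `f : X → Y` be a map from a metric space to a paracompact space, and let `M` be the
mapping cylinder of `f` with the teardrop topology.  Then `M` is paracompact. -/
theorem mapCyl_paracompact (X Y : Type*) [MetricSpace X] [TopologicalSpace Y]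
    [ParacompactSpace Y] (f : X → Y) (hf : Continuous f) :
    @ParacompactSpace (MapCyl X Y) (TopologicalSpace.generateFrom (mapCylBasis X Y f)) := by
  change ParacompactSpace (Teardrop f)
  refine ⟨fun α s hso hsu => ?_⟩
  obtain ⟨A, ε, hAo, hAcov, hAlf, hε, hAs⟩ := exists_locallyFinite_basicOpen_refinement hso hsu
  obtain ⟨g, hgA, hglb⟩ :=
    exists_continuous_lt_of_locallyFinite_cover hf hAo hAcov hAlf fun y => (hε y).1
  obtain ⟨B, hBo, hBcov, hBlf, hBs⟩ := precise_refinement (fun a => inl f ⁻¹' s a)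
    (fun a => (hso a).preimage (continuous_inl hf)) (by rw [← preimage_iUnion, hsu, preimage_univ])
  have hG : IsOpen {q : X × Ioc (0 : ℝ) 1 | g q.1 < q.2} :=
    isOpen_lt (g.continuous.comp continuous_fst) (continuous_subtype_val.comp continuous_snd)
  refine ⟨ULift.{u_1} Y ⊕ α, Sum.elim (fun y => basicOpen f (A y.down) (ε y.down))
    fun a => inl f '' (B a ∩ {q | g q.1 < q.2}), ?_, ?_, ?_, ?_⟩
  · rintro (y | a)
    exacts [isOpen_basicOpen (hAo _) (hε _).1 (hε _).2, isOpenMap_inl _ ((hBo a).inter hG)]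
  · rw [iUnion_sum, ← Equiv.ulift.symm.surjective.iUnion_comp]
    exact iUnion_basicOpen_union_iUnion_image_inl hAcov hgA hBcov
  · exact ((locallyFinite_basicOpen hf hAlf ε).comp_injective ULift.down_injective).sumElim
      ((hBlf.subset fun a => inter_subset_left).image_of_isOpenEmbedding (isOpenEmbedding_inl hf)
        (fun a => inter_subset_right) (closure_image_inl_subset_range hglb))
  · rintro (y | a)
    exacts [hAs y.down,
      ⟨a, (image_mono (inter_subset_left.trans (hBs a))).trans (image_preimage_subset _ _)⟩]
end

section
/- Let X be a separable metric space which is a union of finitely many locally closed subsets, each a topological manifold (without boundary) of dimension at most n. Then X has covering dimension at most n. -/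
/-!
Each stratum is locally a Euclidean space `ℝ^d` with `d ≤ n`, and `ℝ^d` is the union of the
`n + 1` sets of points with exactly `c` rational coordinates, each of them zero-dimensional.
Covering `X` by countably many compact chart pieces and assigning every point to the first piece
containing it, `X` becomes a union of `n + 1` sets, each a countable union of relatively closed
zero-dimensional pieces, hence zero-dimensional by the countable closed sum theorem. On each of
these `n + 1` sets an open cover refines to a pairwise disjoint open family, obtained by cutting
along neighbourhoods whose frontiers miss the set; together these families have order `≤ n + 1`.
-/

open Set

/-- Lebesgue covering dimension at most `n`: every open cover admits an open refinement that
still covers and in which every point lies in at most `n+1` sets. -/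
def CovDimLE (X : Type*) [TopologicalSpace X] (n : ℕ) : Prop :=
  ∀ 𝒰 : Set (Set X), (∀ u ∈ 𝒰, IsOpen u) → ⋃₀ 𝒰 = univ →
    ∃ 𝒱 : Set (Set X), (∀ v ∈ 𝒱, IsOpen v) ∧ ⋃₀ 𝒱 = univ ∧
      (∀ v ∈ 𝒱, ∃ u ∈ 𝒰, v ⊆ u) ∧
      ∀ x : X, {v ∈ 𝒱 | x ∈ v}.Finite ∧ {v ∈ 𝒱 | x ∈ v}.ncard ≤ n + 1

open Filter Topology TopologicalSpace

section ZeroDim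

variable {X Y : Type*} [TopologicalSpace X] [TopologicalSpace Y]

/-- Zero-dimensionality of `M`, witnessed by neighbourhoods in the ambient space. In a completely
normal space it only depends on the subspace topology of `M` (`IsZeroDimIn.image`,
`IsZeroDimIn.preimage`). -/
def IsZeroDimIn (M : Set X) : Prop :=
  ∀ x ∈ M, ∀ u ∈ 𝓝 x, ∃ W, IsOpen W ∧ x ∈ W ∧ W ⊆ u ∧ Disjoint (frontier W) M

theorem isZeroDimIn_empty : IsZeroDimIn (∅ : Set X) := fun _ hx => hx.elim

namespace IsZeroDimIn

theorem mono {M N : Set X} (h : IsZeroDimIn M) (hNM : N ⊆ M) : IsZeroDimIn N := fun x hx u hu =>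
  let ⟨W, hW, hxW, hWu, hWM⟩ := h x (hNM hx) u hu
  ⟨W, hW, hxW, hWu, hWM.mono_right hNM⟩

theorem preimage {f : X → Y} (hf : IsInducing f) {M : Set Y} (h : IsZeroDimIn M) :
    IsZeroDimIn (f ⁻¹' M) := by
  intro x hx u hu
  rw [hf.nhds_eq_comap, mem_comap] at hu
  obtain ⟨u', hu', hu'u⟩ := hu
  obtain ⟨W, hW, hxW, hWu', hWM⟩ := h (f x) hx u' hu'
  exact ⟨f ⁻¹' W, hW.preimage hf.continuous, hxW, (preimage_mono hWu').trans hu'u,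
    (hWM.preimage f).mono_left (hf.continuous.frontier_preimage_subset W)⟩

theorem image [CompletelyNormalSpace Y] {f : X → Y} (hf : IsEmbedding f) {S : Set X}
    (h : IsZeroDimIn S) : IsZeroDimIn (f '' S) := by
  rintro _ ⟨x, hx, rfl⟩ u hu
  obtain ⟨W, hW, hxW, hWu, hWS⟩ := h x hx _
    (hf.continuous.continuousAt.preimage_mem_nhds (interior_mem_nhds.2 hu))
  have hcl := hf.closure_eq_preimage_closure_image
  -- the parts of `S` inside `W` and outside `closure W` are separated sets of `Y`
  have h₁ : Disjoint (closure (f '' (S ∩ W))) (f '' (S \ closure W)) := by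
    rw [disjoint_right]
    rintro _ ⟨s, ⟨-, hs⟩, rfl⟩ hsW
    exact hs ((hcl W).symm ▸ closure_mono (image_mono inter_subset_right) hsW)
  have h₂ : Disjoint (f '' (S ∩ W)) (closure (f '' (S \ closure W))) := by
    rw [disjoint_left]
    rintro _ ⟨s, ⟨-, hs⟩, rfl⟩ hsW
    have : s ∈ closure (closure W)ᶜ :=
      (hcl _).symm ▸ closure_mono (image_mono fun t ht => ht.2) hsW
    exact disjoint_left.1 ((disjoint_compl_right.mono_left subset_closure).closure_right hW) hs this
  obtain ⟨U, V, hU, hV, hSU, hSV, hUV⟩ := separatedNhds_iff_disjoint.2 (completely_normal h₁ h₂)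
  have hUu : IsOpen (U ∩ interior u) := hU.inter isOpen_interior
  refine ⟨U ∩ interior u, hUu, ⟨hSU ⟨x, ⟨hx, hxW⟩, rfl⟩, hWu hxW⟩,
    inter_subset_right.trans interior_subset, ?_⟩
  rw [disjoint_right]
  rintro _ ⟨s, hs, rfl⟩ hfr
  by_cases hsW : s ∈ W
  · exact (hUu.frontier_eq ▸ hfr).2 ⟨hSU ⟨s, ⟨hs, hsW⟩, rfl⟩, hWu hsW⟩
  · have hsW' : s ∉ closure W := fun h' => disjoint_left.1 hWS (hW.frontier_eq ▸ ⟨h', hsW⟩) hs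
    exact disjoint_left.1 (hUV.closure_left hV)
      (closure_mono inter_subset_left (frontier_subset_closure hfr)) (hSV ⟨s, ⟨hs, hsW'⟩, rfl⟩)

end IsZeroDimIn

def CoveredByZeroDim (ι : Type*) (S : Set X) : Prop :=
  ∃ N : ι → Set X, (∀ c, IsZeroDimIn (N c)) ∧ S ⊆ ⋃ c, N c

namespace CoveredByZeroDim

variable {ι : Type*} {S T : Set X}

theorem mono (h : CoveredByZeroDim ι S) (hTS : T ⊆ S) : CoveredByZeroDim ι T :=
  let ⟨N, hN, hSN⟩ := h
  ⟨N, hN, hTS.trans hSN⟩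

theorem preimage {f : X → Y} (hf : IsInducing f) {S : Set Y} (h : CoveredByZeroDim ι S) :
    CoveredByZeroDim ι (f ⁻¹' S) :=
  let ⟨N, hN, hSN⟩ := h
  ⟨fun c => f ⁻¹' N c, fun c => (hN c).preimage hf, by
    simpa only [preimage_iUnion] using preimage_mono hSN⟩

theorem image [CompletelyNormalSpace Y] {f : X → Y} (hf : IsEmbedding f)
    (h : CoveredByZeroDim ι S) : CoveredByZeroDim ι (f '' S) :=
  let ⟨N, hN, hSN⟩ := h
  ⟨fun c => f '' N c, fun c => (hN c).image hf, by
    simpa only [image_iUnion] using image_mono hSN⟩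

end CoveredByZeroDim

end ZeroDim

section Separation

variable {X : Type*} [TopologicalSpace X]

theorem exists_pairwiseDisjoint_refinement_of_disjoint_frontier [SecondCountableTopology X]
    {Z : Set X} {𝒲 : Set (Set X)} (h𝒲 : ∀ W ∈ 𝒲, IsOpen W ∧ Disjoint (frontier W) Z)
    (hZ : Z ⊆ ⋃₀ 𝒲) :
    ∃ 𝒱 : Set (Set X), (∀ V ∈ 𝒱, IsOpen V ∧ ∃ W ∈ 𝒲, V ⊆ W) ∧ 𝒱.PairwiseDisjoint id ∧
      Z ⊆ ⋃₀ 𝒱 := by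
  obtain ⟨𝒯, h𝒯c, h𝒯𝒲, h𝒯eq⟩ := isOpen_sUnion_countable 𝒲 fun W hW => (h𝒲 W hW).1
  rcases 𝒯.eq_empty_or_nonempty with rfl | h𝒯ne
  · exact ⟨∅, by simp, pairwiseDisjoint_empty, by simpa [← h𝒯eq] using hZ⟩
  obtain ⟨W, rfl⟩ := h𝒯c.exists_eq_range h𝒯ne
  have hW k : IsOpen (W k) ∧ Disjoint (frontier (W k)) Z := h𝒲 _ (h𝒯𝒲 (mem_range_self k))
  let V k := W k ∩ disjointed (fun j => closure (W j)) k
  refine ⟨range V, ?_, ?_, ?_⟩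
  · rintro _ ⟨k, rfl⟩
    refine ⟨?_, W k, h𝒯𝒲 (mem_range_self k), inter_subset_left⟩
    have hV : V k = W k ∩ ⋂ j < k, (closure (W j))ᶜ := by
      simp only [V, disjointed_eq_inter_compl, ← inter_assoc, inter_eq_left.2 subset_closure]
    rw [hV]
    exact (hW k).1.inter ((finite_lt_nat k).isOpen_biInter fun j _ => isClosed_closure.isOpen_compl)
  · exact Pairwise.range_pairwise fun k l hkl =>
      (disjoint_disjointed _ hkl).mono inter_subset_right inter_subset_right
  · intro z hz
    have hz' : z ∈ ⋃ k, disjointed (fun j => closure (W j)) k := by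
      rw [iUnion_disjointed]
      obtain ⟨_, ⟨k, rfl⟩, hzk⟩ := h𝒯eq ▸ hZ hz
      exact mem_iUnion.2 ⟨k, subset_closure hzk⟩
    obtain ⟨k, hk⟩ := mem_iUnion.1 hz'
    have hzW : z ∈ W k := by
      by_contra hzW
      have hzcl : z ∈ closure (W k) := disjointed_subset (fun j => closure (W j)) k hk
      exact disjoint_left.1 (hW k).2 ((hW k).1.frontier_eq ▸ ⟨hzcl, hzW⟩) hz
    exact ⟨V k, mem_range_self k, hzW, hk⟩

theorem exists_isOpen_superset_disjoint_closure [NormalSpace X] {A B : Set X}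
    (hA : IsClosed A) (hB : IsClosed B) (hAB : Disjoint A B) :
    ∃ G H, IsOpen G ∧ IsOpen H ∧ A ⊆ G ∧ B ⊆ H ∧ Disjoint (closure G) (closure H) := by
  obtain ⟨U, V, hU, hV, hAU, hBV, hUV⟩ := normal_separation hA hB hAB
  obtain ⟨G, hG, hAG, hGU⟩ := normal_exists_closure_subset hA hU hAU
  obtain ⟨H, hH, hBH, hHV⟩ := normal_exists_closure_subset hB hV hBV
  exact ⟨G, H, hG, hH, hAG, hBH, hUV.mono hGU hHV⟩

variable [NormalSpace X] [SecondCountableTopology X]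

theorem IsZeroDimIn.exists_separation {Z A B : Set X} (hZ : IsZeroDimIn Z) (hA : IsClosed A)
    (hB : IsClosed B) (hAB : Disjoint A B) :
    ∃ U V, IsOpen U ∧ IsOpen V ∧ A ⊆ U ∧ B ⊆ V ∧ Disjoint U V ∧ Z ⊆ U ∪ V := by
  obtain ⟨G, H, hG, hH, hAG, hBH, hGH⟩ := exists_isOpen_superset_disjoint_closure hA hB hAB
  have hsmall : ∀ z ∈ Z, ∀ K, z ∉ closure K →
      ∃ W, IsOpen W ∧ Disjoint (frontier W) Z ∧ Disjoint W K ∧ z ∈ W := fun z hz K hK =>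
    let ⟨W, hW, hzW, hWK, hWZ⟩ := hZ z hz _ (isClosed_closure.isOpen_compl.mem_nhds hK)
    ⟨W, hW, hWZ, disjoint_compl_left.mono hWK subset_closure, hzW⟩
  obtain ⟨𝒱, h𝒱, h𝒱d, hZ𝒱⟩ := exists_pairwiseDisjoint_refinement_of_disjoint_frontier
    (𝒲 := {W | IsOpen W ∧ Disjoint (frontier W) Z ∧ (Disjoint W H ∨ Disjoint W G)})
    (fun W hW => ⟨hW.1, hW.2.1⟩) fun z hz => by
      by_cases hzH : z ∈ closure H
      · obtain ⟨W, hW, hWZ, hWG, hzW⟩ :=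
          hsmall z hz G fun hzG => disjoint_left.1 hGH hzG hzH
        exact ⟨W, ⟨hW, hWZ, Or.inr hWG⟩, hzW⟩
      · obtain ⟨W, hW, hWZ, hWH, hzW⟩ := hsmall z hz H hzH
        exact ⟨W, ⟨hW, hWZ, Or.inl hWH⟩, hzW⟩
  have hopen : ∀ 𝒮 ⊆ 𝒱, IsOpen (⋃₀ 𝒮) := fun 𝒮 h𝒮 =>
    isOpen_sUnion fun v hv => (h𝒱 v (h𝒮 hv)).1
  have hVG : ∀ v ∈ 𝒱, ¬Disjoint v H → Disjoint v G := fun v hv hvH => by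
    obtain ⟨-, W, ⟨-, -, hWH | hWG⟩, hvW⟩ := h𝒱 v hv
    exacts [absurd (hWH.mono_left hvW) hvH, hWG.mono_left hvW]
  set U₀ := ⋃₀ {v ∈ 𝒱 | Disjoint v H}
  set V₀ := ⋃₀ {v ∈ 𝒱 | ¬Disjoint v H}
  refine ⟨G ∪ U₀, H ∪ V₀, hG.union (hopen _ (sep_subset _ _)), hH.union (hopen _ (sep_subset _ _)),
    subset_union_of_subset_left hAG _, subset_union_of_subset_left hBH _, ?_, ?_⟩
  · refine disjoint_union_left.2 ⟨disjoint_union_right.2 ⟨?_, ?_⟩, disjoint_union_right.2 ⟨?_, ?_⟩⟩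
    · exact hGH.mono subset_closure subset_closure
    · exact disjoint_sUnion_right.2 fun v hv => (hVG v hv.1 hv.2).symm
    · exact disjoint_sUnion_left.2 fun v hv => hv.2
    · refine disjoint_sUnion_left.2 fun v hv => disjoint_sUnion_right.2 fun w hw => ?_
      exact h𝒱d hv.1 hw.1 fun hvw => hw.2 (hvw ▸ hv.2)
  · intro z hz
    obtain ⟨v, hv, hzv⟩ := hZ𝒱 hz
    by_cases hvH : Disjoint v H
    exacts [Or.inl (Or.inr ⟨v, ⟨hv, hvH⟩, hzv⟩), Or.inr (Or.inr ⟨v, ⟨hv, hvH⟩, hzv⟩)]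

theorem IsZeroDimIn.exists_separation_disjoint_closure {Z A B : Set X} (hZc : IsClosed Z)
    (hZ : IsZeroDimIn Z) (hA : IsClosed A) (hB : IsClosed B) (hAB : Disjoint A B) :
    ∃ G H, IsOpen G ∧ IsOpen H ∧ A ⊆ G ∧ B ⊆ H ∧ Z ⊆ G ∪ H ∧
      Disjoint (closure G) (closure H) := by
  obtain ⟨U, V, hU, hV, hAU, hBV, hUV, hZUV⟩ := hZ.exists_separation hA hB hAB
  have hdisj : Disjoint (A ∪ Z \ V) (B ∪ Z \ U) := by
    refine disjoint_union_left.2 ⟨disjoint_union_right.2 ⟨hAB, ?_⟩, disjoint_union_right.2 ⟨?_, ?_⟩⟩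
    · exact disjoint_left.2 fun x hxA hx => hx.2 (hAU hxA)
    · exact disjoint_left.2 fun x hx hxB => hx.2 (hBV hxB)
    · exact disjoint_left.2 fun x hx hx' => (hZUV hx.1).elim hx'.2 hx.2
  obtain ⟨G, H, hG, hH, hAG, hBH, hGH⟩ := exists_isOpen_superset_disjoint_closure
    (hA.union (hZc.sdiff hV)) (hB.union (hZc.sdiff hU)) hdisj
  refine ⟨G, H, hG, hH, subset_union_left.trans hAG, subset_union_left.trans hBH, fun z hz => ?_,
    hGH⟩
  by_cases hzV : z ∈ V
  · exact Or.inr (hBH (Or.inr ⟨hz, fun hzU => disjoint_left.1 hUV hzU hzV⟩))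
  · exact Or.inl (hAG (Or.inr ⟨hz, hzV⟩))

end Separation

section SumTheorem

variable {X : Type*} [TopologicalSpace X] [NormalSpace X] [SecondCountableTopology X]
  {F : ℕ → Set X}

theorem exists_seq_isOpen_disjoint_of_isZeroDimIn (hF : ∀ k, IsClosed (F k))
    (hFZ : ∀ k, IsZeroDimIn (F k)) {A B : Set X} (hA : IsClosed A) (hB : IsClosed B)
    (hAB : Disjoint A B) :
    ∃ G H : ℕ → Set X, (∀ k, IsOpen (G k) ∧ IsOpen (H k) ∧ Disjoint (G k) (H k) ∧
      F k ⊆ G k ∪ H k) ∧ Monotone G ∧ Monotone H ∧ A ⊆ G 0 ∧ B ⊆ H 0 := by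
  choose! next hnext using fun k (P : Set X × Set X) (hP : IsClosed P.1 ∧ IsClosed P.2 ∧
      Disjoint P.1 P.2) =>
    have ⟨G, H, hGH⟩ := (hFZ k).exists_separation_disjoint_closure (hF k) hP.1 hP.2.1 hP.2.2
    (⟨(G, H), hGH⟩ : ∃ Q : Set X × Set X, IsOpen Q.1 ∧ IsOpen Q.2 ∧ P.1 ⊆ Q.1 ∧ P.2 ⊆ Q.2 ∧
      F k ⊆ Q.1 ∪ Q.2 ∧ Disjoint (closure Q.1) (closure Q.2))
  -- step `k` swallows `F k`; disjoint closures let the next step start from the closures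
  let seq : ℕ → Set X × Set X := fun k =>
    Nat.rec (motive := fun _ => Set X × Set X) (next 0 (A, B))
      (fun k Q => next (k + 1) (closure Q.1, closure Q.2)) k
  have hseq : ∀ k, IsOpen (seq k).1 ∧ IsOpen (seq k).2 ∧ F k ⊆ (seq k).1 ∪ (seq k).2 ∧
      Disjoint (closure (seq k).1) (closure (seq k).2) := by
    intro k
    induction k with
    | zero =>
      obtain ⟨h₁, h₂, -, -, h₃, h₄⟩ := hnext 0 (A, B) ⟨hA, hB, hAB⟩
      exact ⟨h₁, h₂, h₃, h₄⟩
    | succ k ih =>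
      obtain ⟨h₁, h₂, -, -, h₃, h₄⟩ := hnext (k + 1) (closure (seq k).1, closure (seq k).2)
        ⟨isClosed_closure, isClosed_closure, ih.2.2.2⟩
      exact ⟨h₁, h₂, h₃, h₄⟩
  have hsucc k := (hnext (k + 1) (closure (seq k).1, closure (seq k).2)
    ⟨isClosed_closure, isClosed_closure, (hseq k).2.2.2⟩).2.2
  have h₀ := (hnext 0 (A, B) ⟨hA, hB, hAB⟩).2.2
  refine ⟨fun k => (seq k).1, fun k => (seq k).2,
    fun k => ⟨(hseq k).1, (hseq k).2.1, (hseq k).2.2.2.mono subset_closure subset_closure,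
      (hseq k).2.2.1⟩,
    monotone_nat_of_le_succ fun k => subset_closure.trans (hsucc k).1,
    monotone_nat_of_le_succ fun k => subset_closure.trans (hsucc k).2.1, h₀.1, h₀.2.1⟩

theorem exists_isClopen_separating_of_iUnion_isZeroDimIn (hF : ∀ k, IsClosed (F k))
    (hFZ : ∀ k, IsZeroDimIn (F k)) (hcov : ⋃ k, F k = univ) {A B : Set X} (hA : IsClosed A)
    (hB : IsClosed B) (hAB : Disjoint A B) : ∃ C, IsClopen C ∧ A ⊆ C ∧ Disjoint C B := by
  obtain ⟨G, H, hGH, hG, hH, hAG, hBH⟩ := exists_seq_isOpen_disjoint_of_isZeroDimIn hF hFZ hA hB hAB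
  have hcompl : IsCompl (⋃ k, G k) (⋃ k, H k) := by
    refine ⟨disjoint_iUnion_left.2 fun i => disjoint_iUnion_right.2 fun j => ?_,
      codisjoint_iff.2 (eq_univ_of_univ_subset fun x _ => ?_)⟩
    · exact (hGH (max i j)).2.2.1.mono (hG (le_max_left i j)) (hH (le_max_right i j))
    · obtain ⟨k, hk⟩ := mem_iUnion.1 (hcov ▸ mem_univ x)
      exact ((hGH k).2.2.2 hk).imp (mem_iUnion_of_mem k) (mem_iUnion_of_mem k)
  refine ⟨⋃ k, G k, ⟨?_, isOpen_iUnion fun k => (hGH k).1⟩, hAG.trans (subset_iUnion G 0),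
    hcompl.disjoint.mono_right (hBH.trans (subset_iUnion H 0))⟩
  rw [hcompl.eq_compl]
  exact (isOpen_iUnion fun k => (hGH k).2.1).isClosed_compl

theorem isZeroDimIn_univ_of_iUnion_eq_univ [T1Space X] (hF : ∀ k, IsClosed (F k))
    (hFZ : ∀ k, IsZeroDimIn (F k)) (hcov : ⋃ k, F k = univ) : IsZeroDimIn (univ : Set X) := by
  intro x _ u hu
  obtain ⟨C, hC, hxC, hCu⟩ := exists_isClopen_separating_of_iUnion_isZeroDimIn hF hFZ hcov
    isClosed_singleton isOpen_interior.isClosed_compl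
    (disjoint_singleton_left.2 (not_not.2 (mem_interior_iff_mem_nhds.2 hu)))
  exact ⟨C, hC.isOpen, hxC rfl, fun y hy => interior_subset (not_not.1 (disjoint_left.1 hCu hy)),
    by simp [hC.frontier_eq]⟩

end SumTheorem

theorem IsZeroDimIn.of_subset_iUnion {X κ : Type*} [TopologicalSpace X] [CompletelyNormalSpace X]
    [T1Space X] [SecondCountableTopology X] [Countable κ] {M : Set X} {F : κ → Set X}
    (hF : ∀ k, IsClosed (F k)) (hMF : M ⊆ ⋃ k, F k) (hFZ : ∀ k, IsZeroDimIn (M ∩ F k)) :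
    IsZeroDimIn M := by
  rcases isEmpty_or_nonempty κ with hκ | hκ
  · simp only [iUnion_of_empty, subset_empty_iff] at hMF
    exact hMF ▸ isZeroDimIn_empty
  obtain ⟨g, hg⟩ := exists_surjective_nat κ
  have hM := isZeroDimIn_univ_of_iUnion_eq_univ (X := M)
    (F := fun k => ((↑) : M → X) ⁻¹' F (g k))
    (fun k => (hF (g k)).preimage continuous_subtype_val)
    (fun k => ((hFZ (g k)).preimage IsInducing.subtypeVal).mono fun y hy => ⟨y.2, hy⟩)
    (by simpa [← preimage_iUnion, hg.iUnion_comp F] using hMF)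
  simpa using hM.image IsEmbedding.subtypeVal

theorem finite_and_ncard_sep_mem_iUnion_le {α ι : Type*} [Fintype ι] {𝒱 : ι → Set (Set α)}
    (h𝒱 : ∀ c, (𝒱 c).PairwiseDisjoint id) (x : α) :
    {V ∈ ⋃ c, 𝒱 c | x ∈ V}.Finite ∧ {V ∈ ⋃ c, 𝒱 c | x ∈ V}.ncard ≤ Fintype.card ι := by
  have hsing : ∀ c, {V ∈ 𝒱 c | x ∈ V}.Subsingleton := fun c V hV W hW =>
    (h𝒱 c).elim hV.1 hW.1 (not_disjoint_iff.2 ⟨x, hV.2, hW.2⟩)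
  have hunion : {V ∈ ⋃ c, 𝒱 c | x ∈ V} = ⋃ c, {V ∈ 𝒱 c | x ∈ V} := by
    ext V
    simp
  rw [hunion]
  refine ⟨finite_iUnion fun c => (hsing c).finite, ?_⟩
  calc (⋃ c, {V ∈ 𝒱 c | x ∈ V}).ncard ≤ ∑ c, {V ∈ 𝒱 c | x ∈ V}.ncard := by
        simpa using Finset.set_ncard_biUnion_le Finset.univ fun c => {V ∈ 𝒱 c | x ∈ V}
    _ ≤ ∑ _c : ι, 1 := Finset.sum_le_sum fun c _ =>
        (ncard_le_one (hsing c).finite).2 fun _ hV _ hW => hsing c hV hW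
    _ = Fintype.card ι := by simp

theorem covDimLE_of_coveredByZeroDim {X : Type*} [TopologicalSpace X] [SecondCountableTopology X]
    {n : ℕ} (h : CoveredByZeroDim (Fin (n + 1)) (univ : Set X)) : CovDimLE X n := by
  obtain ⟨N, hN, hcov⟩ := h
  intro 𝒰 h𝒰 h𝒰cov
  have h𝒱 : ∀ c, ∃ 𝒱 : Set (Set X), (∀ V ∈ 𝒱, IsOpen V ∧ ∃ u ∈ 𝒰, V ⊆ u) ∧
      𝒱.PairwiseDisjoint id ∧ N c ⊆ ⋃₀ 𝒱 := fun c => by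
    obtain ⟨𝒱, h𝒱, h𝒱d, hN𝒱⟩ := exists_pairwiseDisjoint_refinement_of_disjoint_frontier
      (𝒲 := {W | IsOpen W ∧ Disjoint (frontier W) (N c) ∧ ∃ u ∈ 𝒰, W ⊆ u})
      (fun W hW => ⟨hW.1, hW.2.1⟩) fun z hz => by
        obtain ⟨u, hu, hzu⟩ := h𝒰cov ▸ mem_univ z
        obtain ⟨W, hW, hzW, hWu, hWN⟩ := hN c z hz u ((h𝒰 u hu).mem_nhds hzu)
        exact ⟨W, ⟨hW, hWN, u, hu, hWu⟩, hzW⟩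
    refine ⟨𝒱, fun V hV => ?_, h𝒱d, hN𝒱⟩
    obtain ⟨hVo, W, ⟨-, -, u, hu, hWu⟩, hVW⟩ := h𝒱 V hV
    exact ⟨hVo, u, hu, hVW.trans hWu⟩
  choose 𝒱 h𝒱 h𝒱d hN𝒱 using h𝒱
  refine ⟨⋃ c, 𝒱 c, ?_, ?_, ?_, fun x => by
    simpa using finite_and_ncard_sep_mem_iUnion_le h𝒱d x⟩
  · simp only [mem_iUnion]
    rintro V ⟨c, hV⟩
    exact (h𝒱 c V hV).1
  · refine eq_univ_of_univ_subset (hcov.trans (iUnion_subset fun c => (hN𝒱 c).trans ?_))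
    exact sUnion_mono (subset_iUnion 𝒱 c)
  · simp only [mem_iUnion]
    rintro V ⟨c, hV⟩
    exact (h𝒱 c V hV).2

theorem exists_countable_cover_of_forall_mem_nhdsWithin {X : Type*} [TopologicalSpace X]
    [HereditarilyLindelofSpace X] {P : Set X → Prop} {S : Set X}
    (h : ∀ x ∈ S, ∃ K ∈ 𝓝[S] x, P K) :
    ∃ 𝒦 : Set (Set X), 𝒦.Countable ∧ (∀ K ∈ 𝒦, P K) ∧ S ⊆ ⋃₀ 𝒦 := by
  refine (HereditarilyLindelofSpace.isLindelof S).induction_on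
    (p := fun T => ∃ 𝒦 : Set (Set X), 𝒦.Countable ∧ (∀ K ∈ 𝒦, P K) ∧ T ⊆ ⋃₀ 𝒦)
    (fun T T' hTT' ⟨𝒦, h𝒦, hP, hT'⟩ => ⟨𝒦, h𝒦, hP, hTT'.trans hT'⟩) (fun 𝒮 h𝒮 h => ?_)
    fun x hx => ?_
  · choose! 𝒦 h𝒦 hP hT using h
    refine ⟨⋃ T ∈ 𝒮, 𝒦 T, h𝒮.biUnion h𝒦, ?_, sUnion_subset fun T hT' => (hT T hT').trans ?_⟩
    · simp only [mem_iUnion]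
      rintro K ⟨T, hT', hK⟩
      exact hP T hT' K hK
    · exact sUnion_mono (subset_biUnion_of_mem (u := 𝒦) hT')
  · obtain ⟨K, hK, hPK⟩ := h x hx
    exact ⟨K, hK, {K}, countable_singleton K, by simpa using hPK, by simp⟩

section Euclidean

def ratCoords {ι : Type*} (v : ι → ℝ) : Set ι := {i | v i ∈ range ((↑) : ℚ → ℝ)}

variable {ι : Type*} [Fintype ι]

theorem isZeroDimIn_of_rat_coord_eq {S : Set (ι → ℝ)}
    (hS : ∀ v ∈ S, ∀ w ∈ S, ∀ i (q : ℚ), w i = q → v i = q) : IsZeroDimIn S := by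
  intro v hv u hu
  obtain ⟨ε, hε, hball⟩ := Metric.mem_nhds_iff.1 hu
  choose a ha using fun i => exists_rat_btwn (show v i - ε < v i by linarith)
  choose b hb using fun i => exists_rat_btwn (show v i < v i + ε by linarith)
  have hbox : IsOpen (univ.pi fun i => Ioo (a i : ℝ) (b i)) :=
    isOpen_set_pi finite_univ fun i _ => isOpen_Ioo
  refine ⟨_, hbox, fun i _ => ⟨(ha i).2, (hb i).1⟩, fun w hw => hball ?_, ?_⟩
  · rw [ball_pi _ hε]
    intro i _
    show w i ∈ Metric.ball (v i) ε
    rw [Real.ball_eq_Ioo]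
    exact ⟨(ha i).1.trans (hw i trivial).1, (hw i trivial).2.trans (hb i).2⟩
  -- a frontier point of the box has a rational endpoint as a coordinate, which `v` cannot share
  rw [disjoint_left]
  intro w hfr hwS
  have hcl : ∀ i, (a i : ℝ) ≤ w i ∧ w i ≤ b i := fun i =>
    closure_minimal (pi_mono fun i _ => Ioo_subset_Icc_self)
      (isClosed_set_pi fun i _ => isClosed_Icc) (frontier_subset_closure hfr) i trivial
  obtain ⟨i, hi⟩ : ∃ i, w i ∉ Ioo (a i : ℝ) (b i) :=
    not_forall.1 fun h => (hbox.interior_eq ▸ hfr.2) fun i _ => h i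
  rcases (hcl i).1.eq_or_lt with hai | hai
  · linarith [hS v hv w hwS i (a i) hai.symm, (ha i).2]
  rcases (hcl i).2.eq_or_lt with hbi | hbi
  · linarith [hS v hv w hwS i (b i) hbi, (hb i).1]
  exact hi ⟨hai, hbi⟩

theorem isZeroDimIn_ncard_ratCoords_eq (c : ℕ) :
    IsZeroDimIn {v : ι → ℝ | (ratCoords v).ncard = c} := by
  refine IsZeroDimIn.of_subset_iUnion (κ := {p : Set ι × (ι → ℚ) // p.1.ncard = c})
    (F := fun p => {v | ∀ i ∈ p.1.1, v i = p.1.2 i}) (fun p => ?_) (fun v hv => ?_) fun p => ?_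
  · simp only [ofPred_forall]
    exact isClosed_biInter fun i _ => isClosed_eq (continuous_apply i) continuous_const
  · have : ∀ i, ∃ q : ℚ, i ∈ ratCoords v → v i = q := fun i => by
      by_cases h : i ∈ ratCoords v
      · obtain ⟨q, hq⟩ := h
        exact ⟨q, fun _ => hq.symm⟩
      · exact ⟨0, fun h' => absurd h' h⟩
    choose q hq using this
    exact mem_iUnion.2 ⟨⟨(ratCoords v, q), hv⟩, fun i hi => hq i hi⟩
  have hrat : ∀ w ∈ {v : ι → ℝ | (ratCoords v).ncard = c} ∩ {v | ∀ i ∈ p.1.1, v i = p.1.2 i},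
      ratCoords w = p.1.1 := fun w ⟨hwc, hwp⟩ =>
    (eq_of_subset_of_ncard_le (s := p.1.1)
      (fun i hi => show i ∈ ratCoords w from ⟨p.1.2 i, (hwp i hi).symm⟩)
      (by rw [show (ratCoords w).ncard = c from hwc, p.2]) (toFinite _)).symm
  refine isZeroDimIn_of_rat_coord_eq fun v hv w hw i q hwi => ?_
  have hi : i ∈ p.1.1 := hrat w hw ▸ ⟨q, hwi.symm⟩
  rw [hv.2 i hi, ← hw.2 i hi, hwi]

theorem coveredByZeroDim_univ_pi {n : ℕ} (hn : Fintype.card ι ≤ n) :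
    CoveredByZeroDim (Fin (n + 1)) (univ : Set (ι → ℝ)) := by
  refine ⟨fun c => {v | (ratCoords v).ncard = c}, fun c => isZeroDimIn_ncard_ratCoords_eq c,
    fun v _ => mem_iUnion.2 ⟨⟨(ratCoords v).ncard, Nat.lt_succ_of_le ?_⟩, rfl⟩⟩
  exact (ncard_le_card _).trans (Nat.card_eq_fintype_card (α := ι) ▸ hn)

end Euclidean

theorem CoveredByZeroDim.iUnion_of_isClosed {X ι : Type*} [MetricSpace X]
    [SecondCountableTopology X] {E : ℕ → Set X} (hE : ∀ j, IsClosed (E j))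
    (h : ∀ j, CoveredByZeroDim ι (E j)) : CoveredByZeroDim ι (⋃ j, E j) := by
  choose N hN hEN using h
  -- `disjointed E j` is a closed set minus a closed set, hence a countable union of closed sets
  have hFσ : ∀ j, ∃ F : ℕ → Set X, (∀ s, IsClosed (F s)) ∧ ⋃ s, F s = disjointed E j := fun j => by
    obtain ⟨C, hC, -, hCeq, -⟩ :=
      ((finite_lt_nat j).isClosed_biUnion fun l _ => hE l).isOpen_compl.exists_iUnion_isClosed
    refine ⟨fun s => E j ∩ C s, fun s => (hE j).inter (hC s), ?_⟩
    rw [← inter_iUnion, hCeq, disjointed_eq_inter_compl, compl_iUnion₂]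
    rfl
  choose F hF hFeq using hFσ
  refine ⟨fun c => ⋃ j, N j c ∩ disjointed E j, fun c => ?_, ?_⟩
  · refine IsZeroDimIn.of_subset_iUnion (F := fun p : ℕ × ℕ => F p.1 p.2) (fun p => hF _ _) ?_
      fun ⟨j, s⟩ => (hN j c).mono ?_
    · refine iUnion_subset fun j x hx => ?_
      obtain ⟨s, hs⟩ := mem_iUnion.1 ((hFeq j).symm ▸ hx.2)
      exact mem_iUnion.2 ⟨(j, s), hs⟩
    · rintro x ⟨hx, hxF⟩
      obtain ⟨j', hxN, hxD⟩ := mem_iUnion.1 hx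
      obtain rfl : j' = j := by
        by_contra hne
        exact disjoint_left.1 (disjoint_disjointed E hne) hxD
          ((hFeq j) ▸ mem_iUnion_of_mem s hxF)
      exact hxN
  · rw [← iUnion_disjointed]
    refine iUnion_subset fun j x hx => ?_
    obtain ⟨c, hc⟩ := mem_iUnion.1 (hEN j (disjointed_subset E j hx))
    exact mem_iUnion.2 ⟨c, mem_iUnion.2 ⟨j, hc, hx⟩⟩

theorem coveredByZeroDim_iUnion_of_forall_mem_nhdsWithin {X ι κ : Type*} [MetricSpace X]
    [SecondCountableTopology X] [Countable κ] {S : κ → Set X}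
    (h : ∀ i, ∀ x ∈ S i, ∃ K ∈ 𝓝[S i] x, IsClosed K ∧ CoveredByZeroDim ι K) :
    CoveredByZeroDim ι (⋃ i, S i) := by
  choose 𝒦 h𝒦 hP hS using fun i => exists_countable_cover_of_forall_mem_nhdsWithin (h i)
  obtain ⟨E, hE⟩ := ((countable_iUnion h𝒦).insert ∅).exists_eq_range (insert_nonempty _ _)
  have hEP : ∀ j, IsClosed (E j) ∧ CoveredByZeroDim ι (E j) := fun j => by
    rcases hE ▸ mem_range_self j with h0 | hK
    · rw [h0]
      exact ⟨isClosed_empty, fun _ => ∅, fun _ => isZeroDimIn_empty, empty_subset _⟩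
    · obtain ⟨i, hi⟩ := mem_iUnion.1 hK
      exact hP i _ hi
  refine (CoveredByZeroDim.iUnion_of_isClosed (fun j => (hEP j).1) fun j => (hEP j).2).mono ?_
  rw [← sUnion_range E, ← hE]
  exact iUnion_subset fun i => (hS i).trans (sUnion_mono ((subset_iUnion 𝒦 i).trans
    (subset_insert _ _)))

theorem exists_isClosed_mem_nhdsWithin_coveredByZeroDim {X : Type*} [TopologicalSpace X]
    [T2Space X] [CompletelyNormalSpace X] {T : Set X} {U : Set T} (hU : IsOpen U) {x : T}
    (hx : x ∈ U) {d n : ℕ} (hd : d ≤ n) (e : U ≃ₜ (Fin d → ℝ)) :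
    ∃ K ∈ 𝓝[T] (x : X), IsClosed K ∧ CoveredByZeroDim (Fin (n + 1)) K := by
  set B : Set U := e ⁻¹' Metric.closedBall (e ⟨x, hx⟩) 1
  have hB : B ∈ 𝓝 (⟨x, hx⟩ : U) :=
    e.continuous.continuousAt.preimage_mem_nhds (Metric.closedBall_mem_nhds _ one_pos)
  have hι : IsEmbedding (Subtype.val ∘ Subtype.val : U → X) :=
    IsEmbedding.subtypeVal.comp IsEmbedding.subtypeVal
  refine ⟨Subtype.val ∘ Subtype.val '' B, ?_,
    ((e.isCompact_preimage.2 (isCompact_closedBall _ _)).image hι.continuous).isClosed, ?_⟩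
  · rw [image_comp, ← map_nhds_subtype_val]
    exact image_mem_map (hU.isOpenEmbedding_subtypeVal.map_nhds_eq ⟨x, hx⟩ ▸ image_mem_map hB)
  · exact (((coveredByZeroDim_univ_pi (by simpa using hd)).preimage e.isInducing).image hι).mono
      (image_mono (subset_univ _))

theorem covDim_le_of_finite_manifold_strata_general (X : Type*) [MetricSpace X]
    [TopologicalSpace.SeparableSpace X] (n m : ℕ) (S : Fin m → Set X)
    (hcover : ⋃ i, S i = univ)
    (hman : ∀ i, ∀ x : ↥(S i), ∃ d : ℕ, d ≤ n ∧ ∃ U : Set ↥(S i),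
      IsOpen U ∧ x ∈ U ∧ Nonempty (↥U ≃ₜ (Fin d → ℝ))) :
    CovDimLE X n := by
  have := UniformSpace.secondCountable_of_separable X
  refine covDimLE_of_coveredByZeroDim
    (hcover ▸ coveredByZeroDim_iUnion_of_forall_mem_nhdsWithin fun i x hx => ?_)
  obtain ⟨d, hd, U, hU, hxU, ⟨e⟩⟩ := hman i ⟨x, hx⟩
  exact exists_isClosed_mem_nhdsWithin_coveredByZeroDim hU hxU hd e

/-- Let `X` be a separable metric space which is a union of finitely many locally closed
subsets, each a topological manifold (without boundary) of dimension at most `n`.  Then `X`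
has covering dimension at most `n`. -/
theorem covDim_le_of_finite_manifold_strata (X : Type*) [MetricSpace X]
    [TopologicalSpace.SeparableSpace X] (n m : ℕ) (S : Fin m → Set X)
    (hlc : ∀ i, IsLocallyClosed (S i)) (hcover : ⋃ i, S i = univ)
    (hman : ∀ i, ∀ x : ↥(S i), ∃ d : ℕ, d ≤ n ∧ ∃ U : Set ↥(S i),
      IsOpen U ∧ x ∈ U ∧ Nonempty (↥U ≃ₜ (Fin d → ℝ))) :
    CovDimLE X n :=
  covDim_le_of_finite_manifold_strata_general X n m S hcover hman
end
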